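/- Let (V,Ω) be a symplectic vector space, π a bivector on W with graph L_π, φ: V → W a linear Poisson map (𝔉φ(graph Ω) = L_π), and B a skew-symmetric bilinear form on W. Then the restriction of φ to ker(Ω + φ*B) is a linear isomorphism onto ker Ω_{τ_B(L_π)} = W ∩ τ_B(L_π). In particular, Ω + φ*B is nondegenerate if and only if τ_B(L_π) is the graph of a bivector. -/

import Mathlib

/-!
An element `x` lies in `ker (Ω + φ*B)` exactly when `(x, -φ*(B (φ x)))` lies in `graph Ω`, i.e.
exactly when `(φ x, 0)` lies in `τ_B (𝔉φ (graph Ω)) = τ_B (L_π)` with `x` as the witness of the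
forward image. So `φ` maps `ker (Ω + φ*B)` onto `W ∩ τ_B (L_π)`; and if `φ x = 0` for such an `x`,
then `Ω x = -φ*(B 0) = 0`, so nondegeneracy of `Ω` makes the map injective.
-/

open Module LinearMap

variable {V W U : Type*} [AddCommGroup V] [Module ℝ V] [FiniteDimensional ℝ V]
  [AddCommGroup W] [Module ℝ W] [FiniteDimensional ℝ W]
  [AddCommGroup U] [Module ℝ U] [FiniteDimensional ℝ U]

/-- The canonical symmetric pairing on `V ⊕ V*`. -/
noncomputable def diracPairing (p q : V × Module.Dual ℝ V) : ℝ := (p.2 q.1 + q.2 p.1) / 2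

/-- A subspace of `V ⊕ V*` is isotropic if the pairing vanishes on it. -/
def IsIsotropic (L : Submodule ℝ (V × Module.Dual ℝ V)) : Prop :=
  ∀ p ∈ L, ∀ q ∈ L, diracPairing p q = 0

/-- A Dirac structure: a maximally isotropic subspace. -/
def IsDirac (L : Submodule ℝ (V × Module.Dual ℝ V)) : Prop :=
  IsIsotropic L ∧ ∀ L' : Submodule ℝ (V × Module.Dual ℝ V), IsIsotropic L' → L ≤ L' → L' = L

/-- The graph of a bivector `π : V* → V`. -/
def graphBiv (π : Module.Dual ℝ V →ₗ[ℝ] V) : Submodule ℝ (V × Module.Dual ℝ V) where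
  carrier := {p | p.1 = π p.2}
  add_mem' := by
    intro a b ha hb
    simp only [Set.mem_setOf_eq, Prod.fst_add, Prod.snd_add, map_add] at *
    rw [ha, hb]
  zero_mem' := by simp
  smul_mem' := by
    intro c a ha
    simp only [Set.mem_setOf_eq, Prod.smul_fst, Prod.smul_snd, map_smul] at *
    rw [ha]

/-- Forward image of a Dirac structure along a linear map. -/
def Fwd (φ : V →ₗ[ℝ] W) (L : Submodule ℝ (V × Module.Dual ℝ V)) :
    Submodule ℝ (W × Module.Dual ℝ W) where
  carrier := {q | ∃ x : V, q.1 = φ x ∧ (x, φ.dualMap q.2) ∈ L}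
  add_mem' := by
    rintro a b ⟨x, hx, hxL⟩ ⟨y, hy, hyL⟩
    refine ⟨x + y, ?_, ?_⟩
    · simp [Prod.fst_add, hx, hy]
    · simpa [Prod.snd_add, Prod.mk_add_mk] using L.add_mem hxL hyL
  zero_mem' := ⟨0, by simp, by convert L.zero_mem using 1 <;> simp⟩
  smul_mem' := by
    rintro c a ⟨x, hx, hxL⟩
    refine ⟨c • x, ?_, ?_⟩
    · simp [Prod.smul_fst, hx]
    · simpa [Prod.smul_snd, Prod.smul_mk] using L.smul_mem c hxL

/-- Backward image of a Dirac structure along a linear map. -/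
def Bwd (φ : V →ₗ[ℝ] W) (L : Submodule ℝ (W × Module.Dual ℝ W)) :
    Submodule ℝ (V × Module.Dual ℝ V) where
  carrier := {p | ∃ η : Module.Dual ℝ W, p.2 = φ.dualMap η ∧ (φ p.1, η) ∈ L}
  add_mem' := by
    rintro a b ⟨x, hx, hxL⟩ ⟨y, hy, hyL⟩
    refine ⟨x + y, ?_, ?_⟩
    · simp [Prod.snd_add, hx, hy]
    · simpa [Prod.fst_add, Prod.mk_add_mk] using L.add_mem hxL hyL
  zero_mem' := ⟨0, by simp, by convert L.zero_mem using 1 <;> simp⟩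
  smul_mem' := by
    rintro c a ⟨x, hx, hxL⟩
    refine ⟨c • x, ?_, ?_⟩
    · simp [Prod.smul_snd, hx]
    · simpa [Prod.smul_fst, Prod.smul_mk] using L.smul_mem c hxL

/-- Gauge transformation of a Dirac structure by a 2-form `B : V → V*`. -/
def tau (B : V →ₗ[ℝ] Module.Dual ℝ V) (L : Submodule ℝ (V × Module.Dual ℝ V)) :
    Submodule ℝ (V × Module.Dual ℝ V) where
  carrier := {p | (p.1, p.2 - B p.1) ∈ L}
  add_mem' := by
    intro a b ha hb
    have := L.add_mem ha hb
    simpa [Prod.mk_add_mk, Prod.fst_add, Prod.snd_add, map_add, add_sub_add_comm] using this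
  zero_mem' := by simp; exact L.zero_mem
  smul_mem' := by
    intro c a ha
    have := L.smul_mem c ha
    simpa [Prod.smul_mk, Prod.smul_fst, Prod.smul_snd, smul_sub] using this

/-- Orthogonal of a subspace with respect to a bilinear form `Ω : V → V*`. -/
def orth (Ω : V →ₗ[ℝ] Module.Dual ℝ V) (S : Submodule ℝ V) : Submodule ℝ V where
  carrier := {x | ∀ y ∈ S, Ω x y = 0}
  add_mem' := by
    intro a b ha hb y hy
    simp [map_add, ha y hy, hb y hy]
  zero_mem' := by simp
  smul_mem' := by
    intro c a ha y hy
    simp [ha y hy]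

/-- Pullback of a 2-form along a linear map. -/
def pb (φ : V →ₗ[ℝ] W) (B : W →ₗ[ℝ] Module.Dual ℝ W) : V →ₗ[ℝ] Module.Dual ℝ V :=
  φ.dualMap ∘ₗ B ∘ₗ φ

/-- The Dirac structure associated to a pair `(R, Ω)` of a subspace and a skew form on it. -/
def diracOfForm (R : Submodule ℝ V) (Ω : R →ₗ[ℝ] Module.Dual ℝ R) :
    Submodule ℝ (V × Module.Dual ℝ V) where
  carrier := {p | ∃ hx : p.1 ∈ R, ∀ y : R, p.2 y = Ω ⟨p.1, hx⟩ y}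
  add_mem' := by
    rintro a b ⟨ha, Ha⟩ ⟨hb, Hb⟩
    refine ⟨R.add_mem ha hb, fun y => ?_⟩
    have h : (⟨(a + b).1, R.add_mem ha hb⟩ : R) = ⟨a.1, ha⟩ + ⟨b.1, hb⟩ := rfl
    rw [h, map_add]
    simp [Prod.snd_add, Ha y, Hb y]
  zero_mem' := by
    refine ⟨R.zero_mem, fun y => ?_⟩
    have h : (⟨((0 : V × Module.Dual ℝ V)).1, R.zero_mem⟩ : R) = 0 := rfl
    rw [h, map_zero]
    rfl
  smul_mem' := by
    rintro c a ⟨ha, Ha⟩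
    refine ⟨R.smul_mem c ha, fun y => ?_⟩
    have h : (⟨(c • a).1, R.smul_mem c ha⟩ : R) = c • ⟨a.1, ha⟩ := rfl
    rw [h, map_smul]
    simp [Prod.smul_snd, Ha y]

section Kernel

variable {E F : Type*} [AddCommGroup E] [Module ℝ E] [AddCommGroup F] [Module ℝ F]
  {Ω : E →ₗ[ℝ] Module.Dual ℝ E} {φ : E →ₗ[ℝ] F} {B : F →ₗ[ℝ] Module.Dual ℝ F}

lemma mem_ker_add_pb_iff {x : E} :
    x ∈ LinearMap.ker (Ω + pb φ B) ↔ Ω x = -φ.dualMap (B (φ x)) := by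
  rw [LinearMap.mem_ker, LinearMap.add_apply, add_eq_zero_iff_eq_neg]
  rfl

lemma zero_mem_tau_fwd_graph_iff {w : F} :
    (w, (0 : Module.Dual ℝ F)) ∈ tau B (Fwd φ (LinearMap.graph Ω)) ↔
      ∃ x ∈ LinearMap.ker (Ω + pb φ B), φ x = w := by
  change (∃ x, w = φ x ∧ (x, φ.dualMap (0 - B w)) ∈ LinearMap.graph Ω) ↔ _
  simp only [LinearMap.mem_graph_iff, zero_sub, map_neg, mem_ker_add_pb_iff]
  constructor
  · rintro ⟨x, rfl, hx⟩
    exact ⟨x, hx.symm, rfl⟩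
  · rintro ⟨x, hx, rfl⟩
    exact ⟨x, rfl, hx.symm⟩

lemma mem_ker_of_mem_ker_add_pb_of_map_eq_zero {x : E}
    (hx : x ∈ LinearMap.ker (Ω + pb φ B)) (hφx : φ x = 0) : x ∈ LinearMap.ker Ω := by
  rw [LinearMap.mem_ker, mem_ker_add_pb_iff.mp hx, hφx, map_zero, map_zero, neg_zero]

lemma injOn_ker_add_pb (hnd : LinearMap.ker Ω = ⊥) :
    Set.InjOn φ (LinearMap.ker (Ω + pb φ B)) := by
  intro x hx y hy hxy
  have hsub := mem_ker_of_mem_ker_add_pb_of_map_eq_zero (Submodule.sub_mem _ hx hy)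
    (by rw [map_sub, hxy, sub_self])
  rwa [hnd, Submodule.mem_bot, sub_eq_zero] at hsub

end Kernel

theorem stmt_15_general (Ω : V →ₗ[ℝ] Module.Dual ℝ V)
    (hnd : LinearMap.ker Ω = ⊥)
    (π : Module.Dual ℝ W →ₗ[ℝ] W)
    (φ : V →ₗ[ℝ] W) (hφ : Fwd φ (LinearMap.graph Ω) = graphBiv π)
    (B : W →ₗ[ℝ] Module.Dual ℝ W) :
    (∀ x ∈ LinearMap.ker (Ω + pb φ B),
      (φ x, (0 : Module.Dual ℝ W)) ∈ tau B (graphBiv π)) ∧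
    (∀ x ∈ LinearMap.ker (Ω + pb φ B), ∀ y ∈ LinearMap.ker (Ω + pb φ B),
      φ x = φ y → x = y) ∧
    (∀ w : W, (w, (0 : Module.Dual ℝ W)) ∈ tau B (graphBiv π) →
      ∃ x ∈ LinearMap.ker (Ω + pb φ B), φ x = w) ∧
    (LinearMap.ker (Ω + pb φ B) = ⊥ ↔
      ∀ w : W, (w, (0 : Module.Dual ℝ W)) ∈ tau B (graphBiv π) → w = 0) := by
  rw [← hφ]
  have maps_to : ∀ x ∈ LinearMap.ker (Ω + pb φ B),
      (φ x, (0 : Module.Dual ℝ W)) ∈ tau B (Fwd φ (LinearMap.graph Ω)) :=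
    fun x hx => zero_mem_tau_fwd_graph_iff.mpr ⟨x, hx, rfl⟩
  have onto : ∀ w : W, (w, (0 : Module.Dual ℝ W)) ∈ tau B (Fwd φ (LinearMap.graph Ω)) →
      ∃ x ∈ LinearMap.ker (Ω + pb φ B), φ x = w :=
    fun w => zero_mem_tau_fwd_graph_iff.mp
  refine ⟨maps_to, injOn_ker_add_pb hnd, onto, ⟨fun hk w hw => ?_, fun hall => ?_⟩⟩
  · obtain ⟨x, hx, rfl⟩ := onto w hw
    rw [hk, Submodule.mem_bot] at hx
    rw [hx, map_zero]
  · rw [Submodule.eq_bot_iff]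
    intro x hx
    simpa [hnd] using mem_ker_of_mem_ker_add_pb_of_map_eq_zero hx (hall _ (maps_to x hx))

/-- For a linear Poisson map `φ : (V,Ω) → (W,π)` and a skew form `B` on `W`,
`φ` restricts to an isomorphism `ker(Ω + φ*B) ≅ W ∩ τ_B(L_π)`; in particular `Ω + φ*B` is
nondegenerate iff `τ_B(L_π)` is the graph of a bivector. -/
theorem stmt_15 (Ω : V →ₗ[ℝ] Module.Dual ℝ V) (hΩ : ∀ x y : V, Ω x y = - Ω y x)
    (hnd : LinearMap.ker Ω = ⊥)
    (π : Module.Dual ℝ W →ₗ[ℝ] W) (hπ : ∀ η ν : Module.Dual ℝ W, η (π ν) = - ν (π η))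
    (φ : V →ₗ[ℝ] W) (hφ : Fwd φ (LinearMap.graph Ω) = graphBiv π)
    (B : W →ₗ[ℝ] Module.Dual ℝ W) (hB : ∀ x y : W, B x y = - B y x) :
    (∀ x ∈ LinearMap.ker (Ω + pb φ B),
      (φ x, (0 : Module.Dual ℝ W)) ∈ tau B (graphBiv π)) ∧
    (∀ x ∈ LinearMap.ker (Ω + pb φ B), ∀ y ∈ LinearMap.ker (Ω + pb φ B),
      φ x = φ y → x = y) ∧
    (∀ w : W, (w, (0 : Module.Dual ℝ W)) ∈ tau B (graphBiv π) →
      ∃ x ∈ LinearMap.ker (Ω + pb φ B), φ x = w) ∧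
    (LinearMap.ker (Ω + pb φ B) = ⊥ ↔
      ∀ w : W, (w, (0 : Module.Dual ℝ W)) ∈ tau B (graphBiv π) → w = 0) :=
  stmt_15_general Ω hnd π φ hφ B
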